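/- Let S be a finite orthodox 0-rectangular band, let a, b ∈ S be nonzero, and let e, f ∈ S be idempotents with e R a and f L a. Then b ∈ V(a) if and only if the R-class of b meets V(f) and the L-class of b meets V(e). -/

import Mathlib

variable {S : Type*}

/-- `b` is an inverse of `a`: `a*b*a = a` and `b*a*b = b`. -/
def IsInverseOf [Semigroup S] (b a : S) : Prop := a * b * a = a ∧ b * a * b = b

/-- `invs a` is the set `V(a)` of inverses of `a`. -/
def invs [Semigroup S] (a : S) : Set S := {b | IsInverseOf b a}

/-- `invsSet A` is `V(A) = ⋃ a ∈ A, V(a)`. -/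
def invsSet [Semigroup S] (A : Set S) : Set S := ⋃ a ∈ A, invs a

/-- A semigroup is regular if every element has an inverse. -/
def IsRegularSemigroup (S : Type*) [Semigroup S] : Prop := ∀ a : S, ∃ b, IsInverseOf b a

/-- A permutation matching: a bijection sending each element to one of its inverses. -/
def IsPermMatching [Semigroup S] (f : S → S) : Prop :=
  Function.Bijective f ∧ ∀ a, f a ∈ invs a

def lSet [Semigroup S] (a : S) : Set S := insert a {x | ∃ s, s * a = x}
def rSet [Semigroup S] (a : S) : Set S := insert a {x | ∃ s, a * s = x}
/-- Green's L relation. -/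
def greenL [Semigroup S] (a b : S) : Prop := lSet a = lSet b
/-- Green's R relation. -/
def greenR [Semigroup S] (a b : S) : Prop := rSet a = rSet b
/-- Green's H relation. -/
def greenH [Semigroup S] (a b : S) : Prop := greenL a b ∧ greenR a b
/-- Green's D relation. -/
def greenD [Semigroup S] (a b : S) : Prop := ∃ c, greenL a c ∧ greenR c b
def dClass [Semigroup S] (a : S) : Set S := {b | greenD a b}
def lClass [Semigroup S] (a : S) : Set S := {b | greenL a b}
def rClass [Semigroup S] (a : S) : Set S := {b | greenR a b}

/-- `spow x n = x^(n+1)` (positive powers in a semigroup). -/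
def spow [Semigroup S] (x : S) : ℕ → S
  | 0 => x
  | n + 1 => spow x n * x

/-- `e` is an idempotent positive power of `x`; in a finite semigroup this
characterises `e = x^ω`. -/
def IsOmega [Semigroup S] (x e : S) : Prop := (∃ k : ℕ, e = spow x k) ∧ e * e = e

/-- `y = x^(ω-1)`: `y = x^m` for the least positive `m` with `x^(m+1)` idempotent
(in a finite semigroup `x^(m+1)` idempotent iff `x^(m+1) = x^ω`). Here `m = k+1`. -/
def IsOmegaMinusOne [Semigroup S] (x y : S) : Prop :=
  ∃ k : ℕ, y = spow x k ∧ spow x (k+1) * spow x (k+1) = spow x (k+1) ∧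
    ∀ j < k, ¬ (spow x (j+1) * spow x (j+1) = spow x (j+1))

/-!
In a finite semigroup, `x` and `x * c` generating the same two-sided ideal forces `x R x * c`
(take an idempotent in the subsemigroup of those `t ∈ c S¹` with `x ∈ S¹ x t`; it fixes `x`
on the right). In a finite 0-simple semigroup every nonzero element generates the whole
semigroup, so a nonzero product `x * y` lies in `R_x ∩ L_y`. With `H` trivial this gives
`b ∈ V(a)` as soon as `a * b` and `b * a` are nonzero, and both follow from the right-hand
side: an inverse `c` of `f` in `R_b` makes `f * c`, hence `a * b`, nonzero since `a L f` and
`b R c`; dually for `b * a`. Conversely `b * a ∈ R_b ∩ V(f)` and `a * b ∈ L_b ∩ V(e)`, since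
idempotents in a common `L`- or `R`-class are inverse to each other.
-/

section Green

variable [Semigroup S]

lemma mem_lSet_self (a : S) : a ∈ lSet a := Set.mem_insert _ _
lemma mem_rSet_self (a : S) : a ∈ rSet a := Set.mem_insert _ _
lemma mul_mem_lSet (a s : S) : s * a ∈ lSet a := Set.mem_insert_of_mem _ ⟨s, rfl⟩
lemma mul_mem_rSet (a s : S) : a * s ∈ rSet a := Set.mem_insert_of_mem _ ⟨s, rfl⟩

lemma mul_mem_lSet_mul {x w : S} (h : x ∈ lSet w) (t : S) : x * t ∈ lSet (w * t) := by
  rcases h with rfl | ⟨s, rfl⟩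
  · exact mem_lSet_self _
  · rw [mul_assoc]; exact mul_mem_lSet _ _

lemma mul_mem_rSet_mul {x w : S} (h : x ∈ rSet w) (t : S) : t * x ∈ rSet (t * w) := by
  rcases h with rfl | ⟨s, rfl⟩
  · exact mem_rSet_self _
  · rw [← mul_assoc]; exact mul_mem_rSet _ _

lemma lSet_subset_lSet {x w : S} (h : x ∈ lSet w) : lSet x ⊆ lSet w := by
  rintro v (rfl | ⟨s, rfl⟩)
  · exact h
  · rcases h with rfl | ⟨t, rfl⟩
    · exact mul_mem_lSet _ _
    · rw [← mul_assoc]; exact mul_mem_lSet _ _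

lemma rSet_subset_rSet {x w : S} (h : x ∈ rSet w) : rSet x ⊆ rSet w := by
  rintro v (rfl | ⟨s, rfl⟩)
  · exact h
  · rcases h with rfl | ⟨t, rfl⟩
    · exact mul_mem_rSet _ _
    · rw [mul_assoc]; exact mul_mem_rSet _ _

lemma greenL_of_mem {x w : S} (h₁ : x ∈ lSet w) (h₂ : w ∈ lSet x) : greenL x w :=
  (lSet_subset_lSet h₁).antisymm (lSet_subset_lSet h₂)

lemma greenR_of_mem {x w : S} (h₁ : x ∈ rSet w) (h₂ : w ∈ rSet x) : greenR x w :=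
  (rSet_subset_rSet h₁).antisymm (rSet_subset_rSet h₂)

lemma mem_lSet_of_greenL {x w : S} (h : greenL x w) : x ∈ lSet w := h ▸ mem_lSet_self x
lemma mem_rSet_of_greenR {x w : S} (h : greenR x w) : x ∈ rSet w := h ▸ mem_rSet_self x

lemma mul_eq_of_mem_lSet {y w m : S} (hm : w * m = w) (h : y ∈ lSet w) : y * m = y := by
  rcases h with rfl | ⟨s, rfl⟩
  · exact hm
  · rw [mul_assoc, hm]

lemma mul_eq_of_mem_rSet {y w m : S} (hm : m * w = w) (h : y ∈ rSet w) : m * y = y := by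
  rcases h with rfl | ⟨s, rfl⟩
  · exact hm
  · rw [← mul_assoc, hm]

lemma mem_invs_of_greenL {g h : S} (hg : IsIdempotentElem g) (hh : IsIdempotentElem h)
    (hgh : greenL g h) : h ∈ invs g := by
  have hgh' : g * h = g := mul_eq_of_mem_lSet hh (mem_lSet_of_greenL hgh)
  have hhg : h * g = h := mul_eq_of_mem_lSet hg (mem_lSet_of_greenL hgh.symm)
  exact ⟨by rw [hgh', hg], by rw [hhg, hh]⟩

lemma mem_invs_of_greenR {g h : S} (hg : IsIdempotentElem g) (hh : IsIdempotentElem h)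
    (hgh : greenR g h) : h ∈ invs g := by
  have hgh' : g * h = h := mul_eq_of_mem_rSet hg (mem_rSet_of_greenR hgh.symm)
  have hhg : h * g = g := mul_eq_of_mem_rSet hh (mem_rSet_of_greenR hgh)
  exact ⟨by rw [hgh', hhg], by rw [hhg, hgh']⟩

namespace IsInverseOf

variable {a b : S}

lemma symm (h : IsInverseOf b a) : IsInverseOf a b := ⟨h.2, h.1⟩

lemma isIdempotentElem_mul (h : IsInverseOf b a) : IsIdempotentElem (b * a) := by
  rw [IsIdempotentElem, ← mul_assoc, h.2]

lemma greenR_mul (h : IsInverseOf b a) : greenR b (b * a) :=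
  greenR_of_mem (Or.inr ⟨b, h.2⟩) (mul_mem_rSet b a)

lemma greenL_mul (h : IsInverseOf b a) : greenL a (b * a) :=
  greenL_of_mem (Or.inr ⟨a, by rw [← mul_assoc, h.1]⟩) (mul_mem_lSet a b)

end IsInverseOf

/-- The principal two-sided ideal `S¹ a S¹`. -/
def jSet (a : S) : Set S := {x | ∃ u ∈ lSet a, x ∈ rSet u}

lemma mem_jSet_self (a : S) : a ∈ jSet a := ⟨a, mem_lSet_self a, mem_rSet_self a⟩

lemma mul_mem_jSet {x a : S} (h : x ∈ jSet a) (s : S) : s * x ∈ jSet a ∧ x * s ∈ jSet a := by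
  obtain ⟨u, hu, hx⟩ := h
  exact ⟨⟨s * u, lSet_subset_lSet hu (mul_mem_lSet u s), mul_mem_rSet_mul hx s⟩,
    ⟨u, hu, rSet_subset_rSet hx (mul_mem_rSet x s)⟩⟩

end Green

section Finite

variable [Semigroup S] [Finite S]

lemma exists_isIdempotentElem_of_finite {A : Set S} (hA : A.Nonempty)
    (hmul : ∀ x ∈ A, ∀ y ∈ A, x * y ∈ A) : ∃ m ∈ A, IsIdempotentElem m := by
  let : TopologicalSpace S := ⊥
  have : DiscreteTopology S := ⟨rfl⟩
  exact exists_idempotent_in_compact_subsemigroup (fun _ ↦ continuous_of_discreteTopology)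
    A hA A.toFinite.isCompact hmul

lemma mem_rSet_mul_of_mem_jSet {x c : S} (h : x ∈ jSet (x * c)) : x ∈ rSet (x * c) := by
  set A : Set S := {t | t ∈ rSet c ∧ x ∈ lSet (x * t)}
  have hA : A.Nonempty := by
    obtain ⟨u, hu, hxu⟩ := h
    rcases hxu with rfl | ⟨q, rfl⟩
    · exact ⟨c, mem_rSet_self c, hu⟩
    · refine ⟨c * q, mul_mem_rSet c q, ?_⟩
      simpa only [mul_assoc] using mul_mem_lSet_mul hu q
  have hmul : ∀ t₁ ∈ A, ∀ t₂ ∈ A, t₁ * t₂ ∈ A := by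
    rintro t₁ ⟨ht₁, hx₁⟩ t₂ ⟨-, hx₂⟩
    refine ⟨rSet_subset_rSet ht₁ (mul_mem_rSet t₁ t₂), lSet_subset_lSet ?_ hx₂⟩
    simpa only [mul_assoc] using mul_mem_lSet_mul hx₁ t₂
  obtain ⟨m, ⟨hmc, hxm⟩, hm⟩ := exists_isIdempotentElem_of_finite hA hmul
  have hxm_eq : x * m = x := mul_eq_of_mem_lSet (by rw [mul_assoc, hm]) hxm
  simpa only [hxm_eq] using mul_mem_rSet_mul hmc x

lemma mem_lSet_mul_of_mem_jSet {y c : S} (h : y ∈ jSet (c * y)) : y ∈ lSet (c * y) := by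
  set A : Set S := {t | t ∈ lSet c ∧ y ∈ rSet (t * y)}
  have hA : A.Nonempty := by
    obtain ⟨u, hu, hyu⟩ := h
    rcases hu with rfl | ⟨p, rfl⟩
    · exact ⟨c, mem_lSet_self c, hyu⟩
    · exact ⟨p * c, mul_mem_lSet c p, by rwa [mul_assoc]⟩
  have hmul : ∀ t₁ ∈ A, ∀ t₂ ∈ A, t₁ * t₂ ∈ A := by
    rintro t₁ ⟨-, hy₁⟩ t₂ ⟨ht₂, hy₂⟩
    refine ⟨lSet_subset_lSet ht₂ (mul_mem_lSet t₂ t₁), rSet_subset_rSet ?_ hy₁⟩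
    simpa only [mul_assoc] using mul_mem_rSet_mul hy₂ t₁
  obtain ⟨m, ⟨hmc, hym⟩, hm⟩ := exists_isIdempotentElem_of_finite hA hmul
  have hmy_eq : m * y = y := mul_eq_of_mem_rSet (by rw [← mul_assoc, hm]) hym
  simpa only [hmy_eq] using mul_mem_lSet_mul hmc y

end Finite

section Zero

variable [Semigroup S] {z : S} (hz : ∀ x : S, z * x = z ∧ x * z = z)
include hz

lemma eq_of_mem_lSet_zero {x : S} (h : x ∈ lSet z) : x = z := by
  rcases h with rfl | ⟨s, rfl⟩
  exacts [rfl, (hz s).2]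

lemma eq_of_mem_rSet_zero {x : S} (h : x ∈ rSet z) : x = z := by
  rcases h with rfl | ⟨s, rfl⟩
  exacts [rfl, (hz s).1]

lemma ne_of_greenL_of_ne {x y : S} (h : greenL x y) (hx : x ≠ z) : y ≠ z := by
  rintro rfl
  exact hx (eq_of_mem_lSet_zero hz (mem_lSet_of_greenL h))

lemma ne_of_greenR_of_ne {x y : S} (h : greenR x y) (hx : x ≠ z) : y ≠ z := by
  rintro rfl
  exact hx (eq_of_mem_rSet_zero hz (mem_rSet_of_greenR h))

lemma mul_ne_of_greenL_of_greenR {x x' y y' : S} (hx : greenL x x') (hy : greenR y y')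
    (hxy : x * y ≠ z) : x' * y' ≠ z := by
  intro h
  have hx'y : x' * y = z := eq_of_mem_rSet_zero hz (h ▸ mul_mem_rSet_mul (mem_rSet_of_greenR hy) x')
  exact hxy (eq_of_mem_lSet_zero hz (hx'y ▸ mul_mem_lSet_mul (mem_lSet_of_greenL hx) y))

lemma IsInverseOf.mul_ne {b a : S} (h : IsInverseOf b a) (ha : a ≠ z) :
    a * b ≠ z ∧ b * a ≠ z := by
  refine ⟨fun hab ↦ ha ?_, fun hba ↦ ha ?_⟩
  · rw [← h.1, hab, (hz a).1]
  · rw [← h.1, mul_assoc, hba, (hz a).2]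

end Zero

section ZeroSimple

variable [Semigroup S] {z : S} (hz : ∀ x : S, z * x = z ∧ x * z = z)
  (hsimple : ∀ I : Set S, I.Nonempty → (∀ a ∈ I, ∀ s : S, s * a ∈ I ∧ a * s ∈ I) →
    I = {z} ∨ I = Set.univ)
include hsimple

lemma mem_jSet_of_ne {w : S} (hw : w ≠ z) (x : S) : x ∈ jSet w := by
  rcases hsimple (jSet w) ⟨w, mem_jSet_self w⟩ (fun _ h ↦ mul_mem_jSet h) with h | h
  · exact absurd (h ▸ mem_jSet_self w : w ∈ ({z} : Set S)) hw
  · exact h ▸ Set.mem_univ x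

variable [Finite S]

lemma greenR_mul_of_ne {x y : S} (h : x * y ≠ z) : greenR x (x * y) :=
  greenR_of_mem (mem_rSet_mul_of_mem_jSet (mem_jSet_of_ne hsimple h x)) (mul_mem_rSet x y)

lemma greenL_mul_of_ne {x y : S} (h : x * y ≠ z) : greenL y (x * y) :=
  greenL_of_mem (mem_lSet_mul_of_mem_jSet (mem_jSet_of_ne hsimple h y)) (mul_mem_lSet y x)

include hz

lemma mul_mul_self_eq_of_ne (hH : ∀ a b : S, greenH a b → a = b) {x y : S}
    (hxy : x * y ≠ z) (hyx : y * x ≠ z) : x * y * x = x := by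
  have hxyx : x * y * x ≠ z :=
    mul_ne_of_greenL_of_greenR hz (greenL_mul_of_ne hsimple hxy) rfl hyx
  exact (hH x _ ⟨greenL_mul_of_ne hsimple hxyx,
    (greenR_mul_of_ne hsimple hxy).trans (greenR_mul_of_ne hsimple hxyx)⟩).symm

lemma mem_invs_of_mul_ne (hH : ∀ a b : S, greenH a b → a = b) {a b : S}
    (hab : a * b ≠ z) (hba : b * a ≠ z) : b ∈ invs a :=
  ⟨mul_mul_self_eq_of_ne hz hsimple hH hab hba, mul_mul_self_eq_of_ne hz hsimple hH hba hab⟩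

end ZeroSimple

theorem stmt_17_general (S : Type*) [Semigroup S] [Fintype S]
    (z : S) (hz : ∀ x : S, z * x = z ∧ x * z = z)
    (h0simple : (∃ a b : S, a * b ≠ z) ∧
      ∀ I : Set S, I.Nonempty → (∀ a ∈ I, ∀ s : S, s * a ∈ I ∧ a * s ∈ I) →
        I = {z} ∨ I = Set.univ)
    (hH : ∀ a b : S, greenH a b → a = b)
    (a b : S) (ha : a ≠ z)
    (e f : S) (hee : e * e = e) (hff : f * f = f)
    (hea : greenR e a) (hfa : greenL f a) :
    b ∈ invs a ↔
      (rClass b ∩ invs f).Nonempty ∧ (lClass b ∩ invs e).Nonempty := by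
  constructor
  · intro h
    exact ⟨⟨b * a, h.greenR_mul,
        mem_invs_of_greenL hff h.isIdempotentElem_mul (hfa.trans h.greenL_mul)⟩,
      ⟨a * b, h.symm.greenL_mul,
        mem_invs_of_greenR hee h.symm.isIdempotentElem_mul (hea.trans h.symm.greenR_mul)⟩⟩
  · rintro ⟨⟨c, hbc, hc⟩, ⟨d, hbd, hd⟩⟩
    have hfc : f * c ≠ z := (hc.mul_ne hz (ne_of_greenL_of_ne hz hfa.symm ha)).1
    have hde : d * e ≠ z := (hd.mul_ne hz (ne_of_greenR_of_ne hz hea.symm ha)).2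
    exact mem_invs_of_mul_ne hz h0simple.2 hH (mul_ne_of_greenL_of_greenR hz hfa hbc.symm hfc)
      (mul_ne_of_greenL_of_greenR hz hbd.symm hea hde)

/-- Lemma 3.4(i). In a finite orthodox 0-rectangular band, with `a, b`
nonzero, `e, f` idempotents, `e R a` and `f L a`: `b ∈ V(a)` iff the R-class of `b`
meets `V(f)` and the L-class of `b` meets `V(e)`. -/
theorem stmt_17 (S : Type*) [Semigroup S] [Fintype S]
    (z : S) (hz : ∀ x : S, z * x = z ∧ x * z = z)
    (hreg : IsRegularSemigroup S)
    (horth : ∀ e f : S, e * e = e → f * f = f → (e * f) * (e * f) = e * f)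
    (h0simple : (∃ a b : S, a * b ≠ z) ∧
      ∀ I : Set S, I.Nonempty → (∀ a ∈ I, ∀ s : S, s * a ∈ I ∧ a * s ∈ I) →
        I = {z} ∨ I = Set.univ)
    (hH : ∀ a b : S, greenH a b → a = b)
    (a b : S) (ha : a ≠ z) (hb : b ≠ z)
    (e f : S) (hee : e * e = e) (hff : f * f = f)
    (hea : greenR e a) (hfa : greenL f a) :
    b ∈ invs a ↔
      (rClass b ∩ invs f).Nonempty ∧ (lClass b ∩ invs e).Nonempty :=
  stmt_17_general S z hz h0simple hH a b ha e f hee hff hea hfa
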